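/- Let n, k be natural numbers with 2k ≤ n + 1. Identify binary forms of degree n over ℂ with their coefficient vectors in ℂ^{n+1}, writing p = Σ_{t=0}^{n} p_t X^t Y^{n−t}. Let S_k ⊆ ℂ^{n+1} be the image of the map (ℂ²)^k → ℂ^{n+1} sending ((a₁,b₁), …, (a_k,b_k)) to the coefficient vector of Σ_{i=1}^{k} (a_i X + b_i Y)ⁿ. Then a binary form p of degree n has coefficient vector lying in the closure of S_k (for the standard topology of ℂ^{n+1}) if and only if there exists a nonzero binary form q of degree k with q(∂)p = 0. -/

import Mathlib

open MvPolynomial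

/-- The linear form `a*X + b*Y` in `ℂ[X,Y]`. -/
noncomputable def lin (a b : ℂ) : MvPolynomial (Fin 2) ℂ :=
  MvPolynomial.C a * MvPolynomial.X 0 + MvPolynomial.C b * MvPolynomial.X 1

/-- The partial derivative `∂_X` (for `i = 0`) or `∂_Y` (for `i = 1`) as a linear map. -/
noncomputable def pd (i : Fin 2) :
    MvPolynomial (Fin 2) ℂ →ₗ[ℂ] MvPolynomial (Fin 2) ℂ :=
  (MvPolynomial.pderiv i).toLinearMap

/-- The apolarity operator `q(∂) = Σ q_{ij} ∂_X^i ∂_Y^j`, as a linear map on `ℂ[X,Y]`. -/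
noncomputable def apolarL (q : MvPolynomial (Fin 2) ℂ) :
    MvPolynomial (Fin 2) ℂ →ₗ[ℂ] MvPolynomial (Fin 2) ℂ :=
  q.support.sum fun m => q.coeff m • (pd 0 ^ m 0 * pd 1 ^ m 1)

/-- The apolarity pairing `⟨q, p⟩`: the value of the constant polynomial `q(∂)p`. -/
noncomputable def pairing (q p : MvPolynomial (Fin 2) ℂ) : ℂ :=
  MvPolynomial.coeff 0 (apolarL q p)

/-!
Every power `ℓⁿ` of a linear form is killed by the linear form `ℓ^⊥` orthogonal to `ℓ`, so a sum
of `k` powers `∑ ℓᵢⁿ` has the nonzero apolar form `∏ ℓᵢ^⊥` of degree `k`. Having a nonzero apolar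
form of degree `k` says that a catalecticant matrix, linear in the coefficients of the form, has a
nontrivial kernel; this is a closed condition, so it passes to the closure.

Conversely, split an apolar form as `q = ℓ q'` with `ℓ = cX + dY`. Then `q'` is apolar to
`ℓ(∂)p`, which by induction on `k` is a limit of sums of `k - 1` powers of degree `n - 1`. On forms
of degree `n`, `ℓ(∂)` is surjective, hence open, and its kernel is spanned by the single power
`(ℓ^⊥)ⁿ`. After perturbing the `ℓᵢ` so that none is apolar to `ℓ`, each `ℓᵢⁿ⁻¹` is `ℓ(∂)` of a
power `ℓᵢ'ⁿ`, so the preimage of `∑ ℓᵢⁿ⁻¹` consists of sums of `k` powers.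
-/

theorem MvPolynomial.pderiv_commute {σ R : Type*} [CommRing R] (i j : σ) :
    Commute (pderiv i : Derivation R (MvPolynomial σ R) (MvPolynomial σ R)).toLinearMap
      (pderiv j).toLinearMap := by
  have h : ⁅pderiv i, pderiv j⁆ = (0 : Derivation R (MvPolynomial σ R) (MvPolynomial σ R)) :=
    derivation_ext fun k => by
      classical
      rw [Derivation.commutator_apply]
      simp [pderiv_X, Pi.single_apply, apply_ite]
  exact LinearMap.ext fun p => sub_eq_zero.mp (DFunLike.congr_fun h p)

theorem Finsupp.degree_fin_two (d : Fin 2 →₀ ℕ) : d.degree = d 0 + d 1 := by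
  rw [Finsupp.degree_eq_sum, Fin.sum_univ_two]

theorem MvPolynomial.IsHomogeneous.natDegree_aeval_X_one_le {R : Type*} [CommSemiring R]
    {q : MvPolynomial (Fin 2) R} {n : ℕ} (hq : q.IsHomogeneous n) :
    (MvPolynomial.aeval ![(Polynomial.X : Polynomial R), 1] q).natDegree ≤ n := by
  rw [q.as_sum, map_sum]
  refine Polynomial.natDegree_sum_le_of_forall_le _ _ fun d hd => ?_
  have hd : d 0 + d 1 = n := by
    rw [← Finsupp.degree_fin_two, Finsupp.degree_eq_weight_one]
    exact hq (mem_support_iff.mp hd)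
  rw [aeval_monomial, Finsupp.prod_fintype _ _ (fun _ => pow_zero _), Fin.prod_univ_two]
  simpa [← Polynomial.C_eq_algebraMap] using
    (Polynomial.natDegree_C_mul_X_pow_le (coeff d q) (d 0)).trans (by omega)

theorem isClosed_setOf_exists_ne_zero_apply_eq_zero {𝕜 E F G : Type*} [RCLike 𝕜]
    [TopologicalSpace E] [NormedAddCommGroup F] [NormedSpace 𝕜 F] [FiniteDimensional 𝕜 F]
    [TopologicalSpace G] [AddCommGroup G] [Module 𝕜 G] [T1Space G]
    (B : E → F →ₗ[𝕜] G) (hB : Continuous fun x : E × F => B x.1 x.2) :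
    IsClosed {x | ∃ y ≠ 0, B x y = 0} := by
  have : ProperSpace F := FiniteDimensional.proper_rclike 𝕜 F
  have hsphere : {x | ∃ y ≠ 0, B x y = 0} =
      Prod.fst '' {z : E × Metric.sphere (0 : F) 1 | B z.1 z.2 = 0} := by
    ext x
    constructor
    · rintro ⟨y, hy, hxy⟩
      refine ⟨(x, ⟨(‖y‖⁻¹ : 𝕜) • y, by simp [norm_smul_inv_norm hy]⟩), ?_, rfl⟩
      simp [hxy]
    · rintro ⟨⟨x, y, hy⟩, hxy, rfl⟩
      exact ⟨y, ne_zero_of_mem_unit_sphere ⟨y, hy⟩, hxy⟩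
  rw [hsphere]
  exact isClosedMap_fst_of_compactSpace _
    (isClosed_singleton.preimage
      (hB.comp (continuous_fst.prodMk (continuous_subtype_val.comp continuous_snd))))

theorem continuous_apply_add_smul_pow {𝕜 A E : Type*} [CommSemiring 𝕜] [TopologicalSpace 𝕜]
    [IsTopologicalSemiring 𝕜] [CommSemiring A] [Algebra 𝕜 A] [AddCommMonoid E] [Module 𝕜 E]
    [TopologicalSpace E] [ContinuousAdd E] [ContinuousSMul 𝕜 E]
    (f : A →ₗ[𝕜] E) (P Q : A) (m : ℕ) :
    Continuous fun s : 𝕜 => f ((P + s • Q) ^ m) := by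
  have h (s : 𝕜) : f ((P + s • Q) ^ m) =
      ∑ j ∈ Finset.range (m + 1), s ^ (m - j) • f (P ^ j * Q ^ (m - j) * (m.choose j : A)) := by
    simp only [add_pow, map_sum, smul_pow, mul_smul_comm, smul_mul_assoc, map_smul]
  simp only [h]
  fun_prop

section CoeffVector

variable {R : Type*} [CommRing R]

noncomputable def binaryExp (n t : ℕ) : Fin 2 →₀ ℕ :=
  Finsupp.single 0 t + Finsupp.single 1 (n - t)

@[simp]
theorem binaryExp_apply_zero (n t : ℕ) : binaryExp n t 0 = t := by
  simp [binaryExp]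

@[simp]
theorem binaryExp_apply_one (n t : ℕ) : binaryExp n t 1 = n - t := by
  simp [binaryExp]

theorem binaryExp_inj {n t t' : ℕ} : binaryExp n t = binaryExp n t' ↔ t = t' :=
  ⟨fun h => by simpa using DFunLike.congr_fun h 0, congrArg _⟩

theorem degree_binaryExp {n t : ℕ} (ht : t ≤ n) : (binaryExp n t).degree = n := by
  rw [Finsupp.degree_fin_two, binaryExp_apply_zero, binaryExp_apply_one]
  omega

theorem eq_binaryExp_of_degree_eq {d : Fin 2 →₀ ℕ} {n : ℕ} (hd : d.degree = n) :
    d = binaryExp n (d 0) := by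
  rw [Finsupp.degree_fin_two] at hd
  ext i
  fin_cases i <;> simp [← hd]

/-- The coefficients of `X^t Y^(n-t)`, `t = 0, …, n`. -/
noncomputable def coeffVector (n : ℕ) : MvPolynomial (Fin 2) R →ₗ[R] (Fin (n + 1) → R) :=
  LinearMap.pi fun t => lcoeff R (binaryExp n t)

theorem coeffVector_apply (n : ℕ) (p : MvPolynomial (Fin 2) R) (t : Fin (n + 1)) :
    coeffVector n p t = coeff (binaryExp n t) p := rfl

noncomputable def ofCoeffVector (n : ℕ) : (Fin (n + 1) → R) →ₗ[R] MvPolynomial (Fin 2) R :=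
  ∑ t : Fin (n + 1), (monomial (binaryExp n t)).comp (LinearMap.proj t)

theorem ofCoeffVector_apply (n : ℕ) (v : Fin (n + 1) → R) :
    ofCoeffVector n v = ∑ t : Fin (n + 1), monomial (binaryExp n t) (v t) := by
  simp [ofCoeffVector]

theorem isHomogeneous_ofCoeffVector (n : ℕ) (v : Fin (n + 1) → R) :
    (ofCoeffVector n v).IsHomogeneous n := by
  rw [ofCoeffVector_apply]
  exact IsHomogeneous.sum _ _ _ fun t _ =>
    isHomogeneous_monomial _ (degree_binaryExp (Nat.lt_succ_iff.mp t.2))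

theorem coeffVector_ofCoeffVector (n : ℕ) (v : Fin (n + 1) → R) :
    coeffVector n (ofCoeffVector n v) = v := by
  funext t
  simp [coeffVector_apply, ofCoeffVector_apply, coeff_sum, coeff_monomial, binaryExp_inj,
    Fin.val_inj]

theorem MvPolynomial.IsHomogeneous.eq_zero_of_coeffVector_eq_zero {n : ℕ}
    {p : MvPolynomial (Fin 2) R} (hp : p.IsHomogeneous n) (h : coeffVector n p = 0) : p = 0 := by
  ext d
  by_contra hd
  have hdeg : d.degree = n := by
    rw [Finsupp.degree_eq_weight_one]
    exact hp hd
  have hd0 : d 0 < n + 1 := by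
    rw [Finsupp.degree_fin_two] at hdeg
    omega
  rw [eq_binaryExp_of_degree_eq hdeg] at hd
  exact hd (congrFun h ⟨d 0, hd0⟩)

theorem MvPolynomial.IsHomogeneous.ofCoeffVector_coeffVector {n : ℕ}
    {p : MvPolynomial (Fin 2) R} (hp : p.IsHomogeneous n) :
    ofCoeffVector n (coeffVector n p) = p :=
  sub_eq_zero.mp <| IsHomogeneous.eq_zero_of_coeffVector_eq_zero
    ((isHomogeneous_ofCoeffVector n _).sub hp)
    (by rw [map_sub, coeffVector_ofCoeffVector, sub_self])

end CoeffVector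

section Apolarity

open scoped IsMulCommutative

-- `aeval` needs a commutative target, so evaluate in the algebra generated by `∂_X, ∂_Y`.
noncomputable abbrev partialDerivs : Subalgebra ℂ (Module.End ℂ (MvPolynomial (Fin 2) ℂ)) :=
  Algebra.adjoin ℂ (Set.range pd)

instance : IsMulCommutative partialDerivs :=
  Algebra.isMulCommutative_adjoin ℂ <| by
    rintro _ ⟨i, rfl⟩ _ ⟨j, rfl⟩
    exact (pderiv_commute i j).eq

noncomputable def apolarHom :
    MvPolynomial (Fin 2) ℂ →ₐ[ℂ] Module.End ℂ (MvPolynomial (Fin 2) ℂ) :=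
  partialDerivs.val.comp (aeval fun i => ⟨pd i, Algebra.subset_adjoin ⟨i, rfl⟩⟩)

theorem apolarHom_apply (q : MvPolynomial (Fin 2) ℂ) : apolarHom q = apolarL q := by
  rw [apolarHom, AlgHom.comp_apply, aeval_def, eval₂_eq', map_sum, apolarL]
  refine Finset.sum_congr rfl fun m _ => ?_
  simp [Fin.prod_univ_two, Algebra.smul_def]

theorem apolarL_mul (q r : MvPolynomial (Fin 2) ℂ) :
    apolarL (q * r) = apolarL q * apolarL r := by
  simp only [← apolarHom_apply, map_mul]

theorem apolarL_C (c : ℂ) : apolarL (C c) = c • 1 := by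
  rw [← apolarHom_apply, ← algebraMap_eq, AlgHom.commutes, Algebra.algebraMap_eq_smul_one]

theorem apolarL_lin_apply (c d : ℂ) (p : MvPolynomial (Fin 2) ℂ) :
    apolarL (lin c d) p = c • pderiv 0 p + d • pderiv 1 p := by
  simp [← apolarHom_apply, lin, apolarHom, Algebra.smul_def, pd]

theorem pderiv_zero_lin (a b : ℂ) : pderiv 0 (lin a b) = C a := by
  simp [lin]

theorem pderiv_one_lin (a b : ℂ) : pderiv 1 (lin a b) = C b := by
  simp [lin]

theorem apolarL_lin_lin_pow (c d a b : ℂ) (m : ℕ) :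
    apolarL (lin c d) (lin a b ^ m) = ((m : ℂ) * (c * a + d * b)) • lin a b ^ (m - 1) := by
  rw [apolarL_lin_apply, pderiv_pow, pderiv_pow, pderiv_zero_lin, pderiv_one_lin]
  simp only [smul_eq_C_mul, map_mul, map_add, map_natCast]
  ring

theorem MvPolynomial.IsHomogeneous.apolarL {q p : MvPolynomial (Fin 2) ℂ} {k n : ℕ}
    (hq : q.IsHomogeneous k) (hp : p.IsHomogeneous n) :
    (apolarL q p).IsHomogeneous (n - k) := by
  have hpd (i : Fin 2) (j : ℕ) {m : ℕ} {r : MvPolynomial (Fin 2) ℂ} (hr : r.IsHomogeneous m) :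
      ((pd i ^ j) r).IsHomogeneous (m - j) := by
    induction j generalizing m r with
    | zero => simpa using hr
    | succ j ih =>
      rw [pow_succ, Module.End.mul_apply, ← Nat.sub_sub, Nat.sub_right_comm]
      exact ih (hr.pderiv (i := i))
  simp only [_root_.apolarL, LinearMap.sum_apply]
  refine IsHomogeneous.sum _ _ _ fun m hm => ?_
  have hm : m 0 + m 1 = k := by
    rw [← Finsupp.degree_fin_two, Finsupp.degree_eq_weight_one]
    exact hq (mem_support_iff.mp hm)
  rw [LinearMap.smul_apply, smul_eq_C_mul, ← zero_add (n - k)]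
  refine (isHomogeneous_C _ _).mul ?_
  simpa [← hm, Nat.sub_add_eq, Nat.sub_right_comm] using hpd 0 (m 0) (hpd 1 (m 1) hp)

end Apolarity

theorem lin_ne_zero {a b : ℂ} (h : (a, b) ≠ 0) : lin a b ≠ 0 := by
  contrapose! h
  have ha := congrArg (pderiv 0) h
  have hb := congrArg (pderiv 1) h
  rw [pderiv_zero_lin, map_zero, C_eq_zero] at ha
  rw [pderiv_one_lin, map_zero, C_eq_zero] at hb
  simp [ha, hb]

theorem isHomogeneous_lin (a b : ℂ) : (lin a b).IsHomogeneous 1 :=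
  (isHomogeneous_C_mul_X a 0).add (isHomogeneous_C_mul_X b 1)

theorem isHomogeneous_lin_pow (a b : ℂ) (n : ℕ) : (lin a b ^ n).IsHomogeneous n := by
  simpa using (isHomogeneous_lin a b).pow n

theorem smul_lin (c a b : ℂ) : c • lin a b = lin (c * a) (c * b) := by
  simp only [lin, smul_add, smul_eq_C_mul, C_mul, mul_assoc]

theorem lin_add_smul_lin (a b s u v : ℂ) :
    lin a b + s • lin u v = lin (a + s * u) (b + s * v) := by
  simp only [lin, smul_add, smul_eq_C_mul, C_add, C_mul]
  ring

theorem exists_smul_lin_pow_eq (τ a b : ℂ) {m : ℕ} (hm : m ≠ 0) :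
    ∃ a' b' : ℂ, τ • lin a b ^ m = lin a' b' ^ m := by
  obtain ⟨ν, rfl⟩ := IsAlgClosed.exists_pow_nat_eq τ (Nat.pos_of_ne_zero hm)
  exact ⟨ν * a, ν * b, by rw [← smul_pow, smul_lin]⟩

theorem exists_apolarL_lin_lin_pow_eq {c d a b : ℂ} (h : c * a + d * b ≠ 0) (m : ℕ) :
    ∃ a' b' : ℂ, apolarL (lin c d) (lin a' b' ^ (m + 1)) = lin a b ^ m := by
  obtain ⟨μ, hμ⟩ := IsAlgClosed.exists_pow_nat_eq ((m + 1 : ℂ) * (c * a + d * b))⁻¹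
    (Nat.succ_pos m : 0 < m + 1)
  refine ⟨μ * a, μ * b, ?_⟩
  have hne : (m + 1 : ℂ) * (c * a + d * b) ≠ 0 := mul_ne_zero (Nat.cast_add_one_ne_zero m) h
  rw [apolarL_lin_lin_pow, ← smul_lin, Nat.add_sub_cancel, smul_pow, smul_smul,
    show ↑(m + 1) * (c * (μ * a) + d * (μ * b)) * μ ^ m =
        μ ^ (m + 1) * ((m + 1) * (c * a + d * b)) by push_cast; ring,
    hμ, inv_mul_cancel₀ hne, one_smul]

theorem exists_lin_apolarL_lin_pow_eq_zero (a b : ℂ) (n : ℕ) :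
    ∃ u v : ℂ, (u, v) ≠ 0 ∧ apolarL (lin u v) (lin a b ^ n) = 0 := by
  have key (u v : ℂ) (h : u * a + v * b = 0) : apolarL (lin u v) (lin a b ^ n) = 0 := by
    rw [apolarL_lin_lin_pow, h, mul_zero, zero_smul]
  by_cases hab : (b, -a) = 0
  · exact ⟨1, 0, by simp, key 1 0 (by simp_all)⟩
  · exact ⟨b, -a, hab, key b (-a) (by ring)⟩

/-- With `g = q(x, 1)`: either `deg g ≤ k` and `Y ∣ q`, or `g` has a root `r` and `X - rY ∣ q`. -/
theorem exists_eq_lin_mul {q : MvPolynomial (Fin 2) ℂ} {k : ℕ} (hq : q.IsHomogeneous (k + 1)) :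
    ∃ a b : ℂ, (a, b) ≠ 0 ∧
      ∃ r : MvPolynomial (Fin 2) ℂ, r.IsHomogeneous k ∧ q = lin a b * r := by
  set g := aeval ![(Polynomial.X : Polynomial ℂ), 1] q
  have hqg : q = g.homogenize (k + 1) := (Polynomial.homogenize_eq_of_isHomogeneous hq rfl).symm
  have hgk : g.natDegree ≤ k + 1 := hq.natDegree_aeval_X_one_le
  rcases hgk.lt_or_eq with hg | hg
  · refine ⟨0, 1, by simp, g.homogenize k, Polynomial.isHomogeneous_homogenize g, ?_⟩
    rw [hqg]
    simpa [lin, mul_comm] using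
      Polynomial.homogenize_mul g 1 (Nat.lt_succ_iff.mp hg) (n := 1) (by simp)
  · have hg0 : g ≠ 0 := by
      rintro h0
      rw [h0, Polynomial.natDegree_zero] at hg
      omega
    obtain ⟨r, hr⟩ := IsAlgClosed.exists_root g (by
      rw [Polynomial.degree_eq_natDegree hg0, hg]; exact_mod_cast k.succ_ne_zero)
    set h := g /ₘ (Polynomial.X - Polynomial.C r)
    have hgh : (Polynomial.X - Polynomial.C r) * h = g :=
      Polynomial.mul_divByMonic_eq_iff_isRoot.mpr hr
    have hh : h.natDegree ≤ k := by
      have hh0 : h ≠ 0 := by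
        rintro h0
        rw [h0, mul_zero] at hgh
        exact hg0 hgh.symm
      have := congrArg Polynomial.natDegree hgh
      rw [Polynomial.natDegree_mul (Polynomial.X_sub_C_ne_zero r) hh0,
        Polynomial.natDegree_X_sub_C, hg] at this
      omega
    refine ⟨1, -r, by simp, h.homogenize k, Polynomial.isHomogeneous_homogenize h, ?_⟩
    rw [hqg, ← hgh, add_comm,
      Polynomial.homogenize_mul _ _ (Polynomial.natDegree_X_sub_C r).le hh]
    simp [lin, sub_eq_add_neg]

section LinApolarMap

variable (m : ℕ) (c d : ℂ)

/-- The matrix of `(cX + dY)(∂)`, from forms of degree `m + 1` to forms of degree `m`. -/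
noncomputable def linApolarMap : (Fin (m + 2) → ℂ) →ₗ[ℂ] (Fin (m + 1) → ℂ) where
  toFun v t := c * (t + 1 : ℕ) * v t.succ + d * (m + 1 - t : ℕ) * v t.castSucc
  map_add' v w := by funext t; simp only [Pi.add_apply]; ring
  map_smul' e v := by funext t; simp only [Pi.smul_apply, smul_eq_mul, RingHom.id_apply]; ring

theorem linApolarMap_apply (v : Fin (m + 2) → ℂ) (t : Fin (m + 1)) :
    linApolarMap m c d v t = c * (t + 1 : ℕ) * v t.succ + d * (m + 1 - t : ℕ) * v t.castSucc :=
  rfl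

theorem coeffVector_apolarL_lin (p : MvPolynomial (Fin 2) ℂ) :
    coeffVector m (apolarL (lin c d) p) = linApolarMap m c d (coeffVector (m + 1) p) := by
  funext t
  have ht : (t : ℕ) ≤ m := Nat.lt_succ_iff.mp t.2
  have h0 : binaryExp m t + Finsupp.single 0 1 = binaryExp (m + 1) (t + 1) := by
    ext i
    fin_cases i <;> simp
  have h1 : binaryExp m t + Finsupp.single 1 1 = binaryExp (m + 1) t := by
    ext i
    fin_cases i <;> simp [Nat.sub_add_comm ht]
  simp only [coeffVector_apply, apolarL_lin_apply, coeff_add, coeff_smul, coeff_pderiv, h0, h1,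
    linApolarMap_apply, Fin.val_succ, Fin.val_castSucc, smul_eq_mul, binaryExp_apply_zero,
    binaryExp_apply_one, Nat.sub_add_comm ht]
  push_cast
  ring

variable {c d}

theorem linApolarMap_coeffVector_lin_pow :
    linApolarMap m c d (coeffVector (m + 1) (lin d (-c) ^ (m + 1))) = 0 := by
  rw [← coeffVector_apolarL_lin, apolarL_lin_lin_pow, show c * d + d * -c = 0 by ring,
    mul_zero, zero_smul, map_zero]

/-- A vector in the kernel is determined by one coordinate, read off by solving the
bidiagonal system from one end. -/
theorem finrank_ker_linApolarMap_le_one (hcd : (c, d) ≠ 0) :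
    Module.finrank ℂ (LinearMap.ker (linApolarMap m c d)) ≤ 1 := by
  obtain ⟨j, hj⟩ : ∃ j, ∀ v ∈ LinearMap.ker (linApolarMap m c d), v j = 0 → v = 0 := by
    by_cases hc : c = 0
    · have hd : d ≠ 0 := fun hd => hcd (by simp [hc, hd])
      refine ⟨Fin.last _, fun v hv hlast => funext fun t => ?_⟩
      induction t using Fin.lastCases with
      | last => exact hlast
      | cast t =>
        have := congrFun (LinearMap.mem_ker.mp hv) t
        simp only [linApolarMap_apply, hc, zero_mul, zero_add, Pi.zero_apply] at this
        exact (mul_eq_zero.mp this).resolve_left (mul_ne_zero hd (by norm_cast; omega))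
    · refine ⟨0, fun v hv hzero => funext fun t => ?_⟩
      induction t using Fin.induction with
      | zero => exact hzero
      | succ t ih =>
        have := congrFun (LinearMap.mem_ker.mp hv) t
        simp only [linApolarMap_apply, ih, mul_zero, add_zero, Pi.zero_apply] at this
        exact (mul_eq_zero.mp this).resolve_left (mul_ne_zero hc (by norm_cast))
  let f := (LinearMap.proj j).comp (LinearMap.ker (linApolarMap m c d)).subtype
  have hf : Function.Injective f := fun v w hvw => Subtype.ext <| sub_eq_zero.mp <|
    hj _ (sub_mem v.2 w.2) (by simpa [f, sub_eq_zero] using hvw)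
  simpa using LinearMap.finrank_le_finrank_of_injective hf

theorem ker_linApolarMap (hcd : (c, d) ≠ 0) :
    LinearMap.ker (linApolarMap m c d) = ℂ ∙ coeffVector (m + 1) (lin d (-c) ^ (m + 1)) := by
  have hne : coeffVector (m + 1) (lin d (-c) ^ (m + 1)) ≠ 0 := fun h =>
    pow_ne_zero _ (lin_ne_zero (by simpa [and_comm] using hcd))
      ((isHomogeneous_lin_pow d (-c) (m + 1)).eq_zero_of_coeffVector_eq_zero h)
  refine (Submodule.eq_of_le_of_finrank_le ?_ ?_).symm
  · exact (Submodule.span_singleton_le_iff_mem _ _).mpr (linApolarMap_coeffVector_lin_pow m)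
  · rw [finrank_span_singleton hne]
    exact finrank_ker_linApolarMap_le_one m hcd

theorem surjective_linApolarMap (hcd : (c, d) ≠ 0) :
    Function.Surjective (linApolarMap m c d) := by
  rw [← LinearMap.range_eq_top]
  apply Submodule.eq_top_of_finrank_eq
  have := (linApolarMap m c d).finrank_range_add_finrank_ker
  have := finrank_ker_linApolarMap_le_one m hcd
  have := Submodule.finrank_le (LinearMap.range (linApolarMap m c d))
  simp only [Module.finrank_fin_fun] at *
  omega

end LinApolarMap

def powerSums (k n : ℕ) : Set (MvPolynomial (Fin 2) ℂ) :=
  Set.range fun ab : Fin k → ℂ × ℂ => ∑ i, lin (ab i).1 (ab i).2 ^ n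

/-- Sums of powers of linear forms `aX + bY` that are not apolar to `cX + dY`. -/
def nonapolarPowerSums (c d : ℂ) (k n : ℕ) : Set (MvPolynomial (Fin 2) ℂ) :=
  {P | ∃ ab : Fin k → ℂ × ℂ, (∀ i, c * (ab i).1 + d * (ab i).2 ≠ 0) ∧
    ∑ i, lin (ab i).1 (ab i).2 ^ n = P}

def secantCone (k n : ℕ) : Set (Fin (n + 1) → ℂ) :=
  coeffVector n '' powerSums k n

theorem zero_mem_powerSums_zero (n : ℕ) : 0 ∈ powerSums 0 n :=
  ⟨fun i => i.elim0, by simp⟩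

theorem add_lin_pow_mem_powerSums {k n : ℕ} {P : MvPolynomial (Fin 2) ℂ}
    (hP : P ∈ powerSums k n) (a b : ℂ) : P + lin a b ^ n ∈ powerSums (k + 1) n := by
  obtain ⟨ab, rfl⟩ := hP
  exact ⟨Fin.snoc ab (a, b), by simp [Fin.sum_univ_castSucc]⟩

theorem isHomogeneous_of_mem_powerSums {k n : ℕ} {P : MvPolynomial (Fin 2) ℂ}
    (hP : P ∈ powerSums k n) : P.IsHomogeneous n := by
  obtain ⟨ab, rfl⟩ := hP
  exact IsHomogeneous.sum _ _ _ fun i _ => isHomogeneous_lin_pow _ _ n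

theorem exists_apolarL_eq_zero_of_mem_powerSums {k n : ℕ} {P : MvPolynomial (Fin 2) ℂ}
    (hP : P ∈ powerSums k n) :
    ∃ q : MvPolynomial (Fin 2) ℂ, q ≠ 0 ∧ q.IsHomogeneous k ∧ apolarL q P = 0 := by
  obtain ⟨ab, rfl⟩ := hP
  choose u v huv hkill using fun i => exists_lin_apolarL_lin_pow_eq_zero (ab i).1 (ab i).2 n
  refine ⟨∏ i : Fin k, lin (u i) (v i),
    Finset.prod_ne_zero_iff.mpr fun i _ => lin_ne_zero (huv i), ?_, ?_⟩
  · simpa using IsHomogeneous.prod Finset.univ (fun i => lin (u i) (v i)) (fun _ => 1)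
      fun i _ => isHomogeneous_lin _ _
  · rw [map_sum]
    refine Finset.sum_eq_zero fun i hi => ?_
    rw [← Finset.prod_erase_mul _ _ hi, apolarL_mul, Module.End.mul_apply, hkill, map_zero]

theorem secantCone_subset_closure_nonapolar {c d : ℂ} (hcd : (c, d) ≠ 0) (k m : ℕ) :
    secantCone k m ⊆ closure (coeffVector m '' nonapolarPowerSums c d k m) := by
  rintro _ ⟨_, ⟨ab, rfl⟩, rfl⟩
  obtain ⟨u, v, huv⟩ : ∃ u v : ℂ, c * u + d * v = 1 := by
    by_cases hc : c = 0
    · have hd : d ≠ 0 := fun hd => hcd (by simp [hc, hd])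
      exact ⟨0, d⁻¹, by simp [mul_inv_cancel₀ hd]⟩
    · exact ⟨c⁻¹, 0, by simp [mul_inv_cancel₀ hc]⟩
  -- move every `ℓᵢ` along `uX + vY`, avoiding the finitely many times where `ℓᵢ` becomes apolar
  let Φ : ℂ → (Fin (m + 1) → ℂ) :=
    fun s => ∑ i, coeffVector m ((lin (ab i).1 (ab i).2 + s • lin u v) ^ m)
  have hΦ : Continuous Φ :=
    continuous_finsetSum _ fun i _ =>
      continuous_apply_add_smul_pow (𝕜 := ℂ) (coeffVector m) _ _ m
  have hbad : Dense (Set.range fun i => -(c * (ab i).1 + d * (ab i).2))ᶜ :=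
    (Set.finite_range _).countable.dense_compl ℂ
  have hΦ0 : Φ 0 = coeffVector m (∑ i, lin (ab i).1 (ab i).2 ^ m) := by simp [Φ]
  rw [← hΦ0]
  refine map_mem_closure hΦ (hbad.closure_eq ▸ Set.mem_univ 0) fun s hs => ?_
  refine ⟨_, ⟨fun i => ((ab i).1 + s * u, (ab i).2 + s * v), fun i h => hs ⟨i, ?_⟩, rfl⟩, ?_⟩
  · linear_combination -h + s * huv
  · simp [Φ, lin_add_smul_lin]

theorem linApolarMap_preimage_nonapolar_subset {c d : ℂ} (hcd : (c, d) ≠ 0) (k m : ℕ) :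
    linApolarMap m c d ⁻¹' (coeffVector m '' nonapolarPowerSums c d k m) ⊆
      secantCone (k + 1) (m + 1) := by
  rintro y ⟨_, ⟨ab, hab, rfl⟩, hy⟩
  choose a' b' hab' using fun i => exists_apolarL_lin_lin_pow_eq (hab i) m
  have hQ : y - coeffVector (m + 1) (∑ i, lin (a' i) (b' i) ^ (m + 1)) ∈
      LinearMap.ker (linApolarMap m c d) := by
    rw [LinearMap.mem_ker, map_sub, ← coeffVector_apolarL_lin, map_sum]
    simp only [hab']
    rw [← hy, sub_self]
  rw [ker_linApolarMap m hcd] at hQ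
  obtain ⟨τ, hτ⟩ := Submodule.mem_span_singleton.mp hQ
  obtain ⟨a, b, hτab⟩ := exists_smul_lin_pow_eq τ d (-c) m.succ_ne_zero
  refine ⟨_, add_lin_pow_mem_powerSums ⟨fun i => (a' i, b' i), rfl⟩ a b, ?_⟩
  rw [map_add, ← hτab, map_smul, hτ, add_sub_cancel]

theorem linApolarMap_preimage_closure_secantCone_subset {c d : ℂ} (hcd : (c, d) ≠ 0)
    (k m : ℕ) :
    linApolarMap m c d ⁻¹' closure (secantCone k m) ⊆ closure (secantCone (k + 1) (m + 1)) := by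
  let D := LinearMap.toContinuousLinearMap (linApolarMap m c d)
  have hD : IsOpenMap D := D.isOpenMap (surjective_linApolarMap m hcd)
  calc linApolarMap m c d ⁻¹' closure (secantCone k m)
      ⊆ D ⁻¹' closure (coeffVector m '' nonapolarPowerSums c d k m) :=
        Set.preimage_mono <|
          closure_minimal (secantCone_subset_closure_nonapolar hcd k m) isClosed_closure
    _ = closure (D ⁻¹' (coeffVector m '' nonapolarPowerSums c d k m)) :=
        hD.preimage_closure_eq_closure_preimage D.continuous _
    _ ⊆ closure (secantCone (k + 1) (m + 1)) :=
        closure_mono (linApolarMap_preimage_nonapolar_subset hcd k m)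

/-- `(v, w) ↦` the coefficients of `q(∂)p`, where `p` and `q` are the forms of degrees `n` and `k`
with coefficient vectors `v` and `w`. -/
noncomputable def catalecticant (n k : ℕ) :
    (Fin (n + 1) → ℂ) →ₗ[ℂ] (Fin (k + 1) → ℂ) →ₗ[ℂ] (Fin (n - k + 1) → ℂ) :=
  ((apolarHom.toLinearMap.compl₁₂ (ofCoeffVector k) (ofCoeffVector n)).compr₂
    (coeffVector (n - k))).flip

theorem exists_catalecticant_eq_zero_iff {n k : ℕ} {p : MvPolynomial (Fin 2) ℂ}
    (hp : p.IsHomogeneous n) :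
    (∃ w ≠ 0, catalecticant n k (coeffVector n p) w = 0) ↔
      ∃ q : MvPolynomial (Fin 2) ℂ, q ≠ 0 ∧ q.IsHomogeneous k ∧ apolarL q p = 0 := by
  have key {q : MvPolynomial (Fin 2) ℂ} (hq : q.IsHomogeneous k) :
      catalecticant n k (coeffVector n p) (coeffVector k q) = 0 ↔ apolarL q p = 0 := by
    simp only [catalecticant, LinearMap.flip_apply, LinearMap.compr₂_apply,
      LinearMap.compl₁₂_apply, hp.ofCoeffVector_coeffVector, hq.ofCoeffVector_coeffVector,
      AlgHom.toLinearMap_apply, apolarHom_apply]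
    exact ⟨(hq.apolarL hp).eq_zero_of_coeffVector_eq_zero, fun h => by rw [h, map_zero]⟩
  constructor
  · rintro ⟨w, hw, hpw⟩
    refine ⟨ofCoeffVector k w, fun h => hw ?_, isHomogeneous_ofCoeffVector k w, ?_⟩
    · rw [← coeffVector_ofCoeffVector k w, h, map_zero]
    · rwa [← key (isHomogeneous_ofCoeffVector k w), coeffVector_ofCoeffVector]
  · rintro ⟨q, hq0, hq, hqp⟩
    exact ⟨coeffVector k q, fun h => hq0 (hq.eq_zero_of_coeffVector_eq_zero h), (key hq).mpr hqp⟩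

theorem exists_apolarL_eq_zero_of_mem_closure_secantCone {k n : ℕ}
    {p : MvPolynomial (Fin 2) ℂ} (hp : p.IsHomogeneous n)
    (h : coeffVector n p ∈ closure (secantCone k n)) :
    ∃ q : MvPolynomial (Fin 2) ℂ, q ≠ 0 ∧ q.IsHomogeneous k ∧ apolarL q p = 0 := by
  have hclosed : IsClosed {v | ∃ w ≠ 0, catalecticant n k v w = 0} :=
    isClosed_setOf_exists_ne_zero_apply_eq_zero _
      (IsModuleTopology.continuous_bilinear_of_finite_left (catalecticant n k))
  have hcone : secantCone k n ⊆ {v | ∃ w ≠ 0, catalecticant n k v w = 0} := by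
    rintro _ ⟨P, hP, rfl⟩
    exact (exists_catalecticant_eq_zero_iff (isHomogeneous_of_mem_powerSums hP)).mpr
      (exists_apolarL_eq_zero_of_mem_powerSums hP)
  exact (exists_catalecticant_eq_zero_iff hp).mp (closure_minimal hcone hclosed h)

theorem coeffVector_mem_closure_secantCone_of_apolarL_eq_zero :
    ∀ {k n : ℕ} {p q : MvPolynomial (Fin 2) ℂ}, k ≤ n → p.IsHomogeneous n → q ≠ 0 →
      q.IsHomogeneous k → apolarL q p = 0 → coeffVector n p ∈ closure (secantCone k n)
  | 0, n, p, q, _, _, hq0, hq, hqp => by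
    rw [← totalDegree_zero_iff_isHomogeneous, totalDegree_eq_zero_iff_eq_C] at hq
    have hc : coeff 0 q ≠ 0 := fun h => hq0 (by rw [hq, h, C_0])
    rw [hq, apolarL_C, LinearMap.smul_apply, Module.End.one_apply, smul_eq_zero] at hqp
    rw [hqp.resolve_left hc, map_zero]
    exact subset_closure ⟨0, zero_mem_powerSums_zero n, map_zero _⟩
  | k + 1, n, p, q, hkn, hp, hq0, hq, hqp => by
    obtain ⟨m, rfl⟩ : ∃ m, n = m + 1 := ⟨n - 1, by omega⟩
    obtain ⟨a, b, hab, r, hr, rfl⟩ := exists_eq_lin_mul hq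
    have hr0 : r ≠ 0 := by rintro rfl; exact hq0 (mul_zero _)
    rw [mul_comm, apolarL_mul, Module.End.mul_apply] at hqp
    have hlp : (apolarL (lin a b) p).IsHomogeneous m := by
      simpa using (isHomogeneous_lin a b).apolarL hp
    have := coeffVector_mem_closure_secantCone_of_apolarL_eq_zero (by omega) hlp hr0 hr hqp
    rw [coeffVector_apolarL_lin] at this
    exact linApolarMap_preimage_closure_secantCone_subset hab k m this

/-- The closure of the set of sums of k n-th powers of linear forms (the cone over the
k-th secant variety of the rational normal curve) consists exactly of those degree-n
forms annihilated by some nonzero degree-k form, when 2k ≤ n + 1. -/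
theorem secant_cone_closure_iff_apolar
    (n k : ℕ) (h : 2 * k ≤ n + 1)
    (coeffVec : MvPolynomial (Fin 2) ℂ → (Fin (n + 1) → ℂ))
    (hcv : ∀ p t, coeffVec p t =
      MvPolynomial.coeff (Finsupp.single 0 (t : ℕ) + Finsupp.single 1 (n - (t : ℕ))) p)
    (S : Set (Fin (n + 1) → ℂ))
    (hS : S = Set.range fun ab : Fin k → ℂ × ℂ =>
      coeffVec (∑ i : Fin k, lin (ab i).1 (ab i).2 ^ n))
    (p : MvPolynomial (Fin 2) ℂ) (hp : p.IsHomogeneous n) :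
    coeffVec p ∈ closure S ↔
      ∃ q : MvPolynomial (Fin 2) ℂ, q ≠ 0 ∧ q.IsHomogeneous k ∧ apolarL q p = 0 := by
  obtain rfl : coeffVec = coeffVector n := funext fun p => funext (hcv p)
  obtain rfl : S = secantCone k n := by rw [hS, secantCone, powerSums, ← Set.range_comp]; rfl
  exact ⟨exists_apolarL_eq_zero_of_mem_closure_secantCone hp, fun ⟨q, hq0, hq, hqp⟩ =>
    coeffVector_mem_closure_secantCone_of_apolarL_eq_zero (by omega) hp hq0 hq hqp⟩
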